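/- If N = q^k * n^2 is an odd perfect number in Eulerian form, then σ(n) ≠ σ(q). -/

import Mathlib

/-!
Since `σ(q^k) ≡ 1 (mod q)`, perfection of `N` forces `q ∣ σ(n²)`, hence `q ∣ σ(p^{2a})` for
some prime power `p^a ∥ n`. Suppose `σ(n) = q + 1`, so that `u = σ(p^a)` divides `q + 1`. The
identity `σ(p^{2a}) + p^a = u (p^a + 1)` shows that `w = σ(p^{2a}) / q` satisfies
`w ≡ p^a (mod u)`, so `w ≥ p^a`; with `σ(p^{2a}) < 2 p^{2a}` this gives
`n < σ(n) = q + 1 ≤ 2 p^a`, whence `n = p^a`. But then `σ(p^{2a}) = q (p^a + 1) + 1` is not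
divisible by `q`.
-/

/-- The sum-of-divisors function. -/
def sigma (n : ℕ) : ℕ := ∑ d ∈ n.divisors, d

/-- The abundancy index as a rational number. -/
noncomputable def Iq (x : ℕ) : ℚ := (sigma x : ℚ) / x

/-- The abundancy index as a real number. -/
noncomputable def Ir (x : ℕ) : ℝ := (sigma x : ℝ) / x

lemma sigma_eq_sigma_one (m : ℕ) : sigma m = ArithmeticFunction.sigma 1 m :=
  (ArithmeticFunction.sigma_one_apply m).symm

lemma sigma_mul_of_coprime {m n : ℕ} (h : m.Coprime n) : sigma (m * n) = sigma m * sigma n := by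
  simp only [sigma_eq_sigma_one]
  exact ArithmeticFunction.isMultiplicative_sigma.map_mul_of_coprime h

lemma sigma_prime_pow {p : ℕ} (hp : p.Prime) (e : ℕ) :
    sigma (p ^ e) = ∑ i ∈ Finset.range (e + 1), p ^ i := by
  rw [sigma_eq_sigma_one, ArithmeticFunction.sigma_one_apply_prime_pow hp]

lemma sigma_prime {p : ℕ} (hp : p.Prime) : sigma p = p + 1 := by
  simpa [Finset.sum_range_succ, add_comm] using sigma_prime_pow hp 1

lemma not_dvd_sigma_prime_pow {p : ℕ} (hp : p.Prime) (e : ℕ) : ¬ p ∣ sigma (p ^ e) := by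
  have h : sigma (p ^ e) = p * ∑ i ∈ Finset.range e, p ^ i + 1 := by
    simp [sigma_prime_pow hp, Finset.sum_range_succ', Finset.mul_sum, pow_succ']
  rw [h, Nat.dvd_add_right (dvd_mul_right p _)]
  exact hp.not_dvd_one

lemma sigma_prime_pow_lt {p : ℕ} (hp : p.Prime) (e : ℕ) : sigma (p ^ e) < 2 * p ^ e := by
  have := Nat.geomSum_lt (s := Finset.range e) hp.two_le fun k hk => Finset.mem_range.mp hk
  rw [sigma_prime_pow hp, Finset.sum_range_succ, two_mul]
  omega

lemma pow_lt_sigma_prime_pow {p a : ℕ} (hp : p.Prime) (ha : a ≠ 0) : p ^ a < sigma (p ^ a) := by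
  have : 0 < ∑ i ∈ Finset.range a, p ^ i :=
    Finset.sum_pos (fun i _ => pow_pos hp.pos i) (Finset.nonempty_range_iff.mpr ha)
  rw [sigma_prime_pow hp, Finset.sum_range_succ]
  omega

lemma sigma_prime_pow_two_mul_add {p : ℕ} (hp : p.Prime) (a : ℕ) :
    sigma (p ^ (2 * a)) + p ^ a = sigma (p ^ a) * (p ^ a + 1) := by
  have hshift : ∑ i ∈ Finset.range (a + 1), p ^ i * p ^ a =
      ∑ i ∈ Finset.range (a + 1), p ^ (a + i) := by
    simp_rw [← pow_add, add_comm _ a]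
  rw [sigma_prime_pow hp, sigma_prime_pow hp, mul_add, mul_one, Finset.sum_mul, hshift,
    show 2 * a + 1 = a + (a + 1) by ring, Finset.sum_range_add,
    Finset.sum_range_succ (fun i => p ^ i) a]
  ring

lemma lt_sigma {n : ℕ} (hn : 1 < n) : n < sigma n := by
  have : 1 ≤ ∑ d ∈ n.properDivisors, d :=
    Finset.single_le_sum (f := fun d => d) (fun _ _ => Nat.zero_le _)
      (Nat.one_mem_properDivisors_iff_one_lt.mpr hn)
  rw [sigma, Nat.sum_divisors_eq_sum_properDivisors_add_self]
  omega

lemma sigma_ordProj_dvd_sigma {n p : ℕ} (hp : p.Prime) (hn : n ≠ 0) :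
    sigma (p ^ n.factorization p) ∣ sigma n := by
  have h := sigma_mul_of_coprime ((Nat.coprime_ordCompl hp hn).pow_left (n.factorization p))
  rw [Nat.ordProj_mul_ordCompl_eq_self] at h
  exact Dvd.intro _ h.symm

lemma exists_dvd_sigma_ordProj_of_dvd_sigma {q m : ℕ} (hq : q.Prime) (hm : m ≠ 0)
    (h : q ∣ sigma m) : ∃ p ∈ m.primeFactors, q ∣ sigma (p ^ m.factorization p) := by
  rw [sigma_eq_sigma_one,
    ArithmeticFunction.isMultiplicative_sigma.multiplicative_factorization _ hm] at h
  simpa only [Nat.support_factorization, sigma_eq_sigma_one] using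
    hq.prime.dvd_finsuppProd_iff.mp h

lemma prime_dvd_sigma_of_perfect {q k m : ℕ} (hq : q.Prime) (hk : k ≠ 0) (hco : q.Coprime m)
    (hperf : sigma (q ^ k * m) = 2 * (q ^ k * m)) : q ∣ sigma m := by
  have hdvd : q ∣ sigma (q ^ k) * sigma m := by
    rw [← sigma_mul_of_coprime (hco.pow_left k), hperf]
    exact dvd_mul_of_dvd_right (dvd_mul_of_dvd_left (dvd_pow_self q hk) m) 2
  exact (hq.dvd_mul.mp hdvd).resolve_left (not_dvd_sigma_prime_pow hq k)

lemma lt_two_mul_pow_of_dvd_sigma_prime_pow_two_mul {p q a : ℕ} (hp : p.Prime) (ha : a ≠ 0)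
    (hq : q ∣ sigma (p ^ (2 * a))) (hu : sigma (p ^ a) ∣ q + 1) : q < 2 * p ^ a := by
  obtain ⟨w, hw⟩ := hq
  have hmod : w ≡ p ^ a [MOD sigma (p ^ a)] := by
    refine Nat.ModEq.add_left_cancel' (q * w) ?_
    have hqw : q * w + w ≡ 0 [MOD sigma (p ^ a)] :=
      Nat.modEq_zero_iff_dvd.mpr (by rw [← add_one_mul]; exact dvd_mul_of_dvd_left hu w)
    have hpa : q * w + p ^ a ≡ 0 [MOD sigma (p ^ a)] :=
      Nat.modEq_zero_iff_dvd.mpr ⟨_, hw ▸ sigma_prime_pow_two_mul_add hp a⟩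
    exact hqw.trans hpa.symm
  have hw_ge : p ^ a ≤ w :=
    calc p ^ a = p ^ a % sigma (p ^ a) := (Nat.mod_eq_of_lt (pow_lt_sigma_prime_pow hp ha)).symm
      _ = w % sigma (p ^ a) := hmod.symm
      _ ≤ w := Nat.mod_le w _
  have hlt : q * p ^ a < 2 * p ^ a * p ^ a :=
    calc q * p ^ a ≤ q * w := Nat.mul_le_mul_left q hw_ge
      _ = sigma (p ^ (2 * a)) := hw.symm
      _ < 2 * p ^ (2 * a) := sigma_prime_pow_lt hp _
      _ = 2 * p ^ a * p ^ a := by ring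
  exact Nat.lt_of_mul_lt_mul_right hlt

lemma not_dvd_sigma_prime_pow_two_mul {p q a : ℕ} (hp : p.Prime) (hq : q ≠ 1)
    (h : sigma (p ^ a) = q + 1) : ¬ q ∣ sigma (p ^ (2 * a)) := by
  have hs : sigma (p ^ (2 * a)) = q * (p ^ a + 1) + 1 := by
    have := sigma_prime_pow_two_mul_add hp a
    rw [h, add_mul, one_mul] at this
    omega
  rw [hs, Nat.dvd_add_right (dvd_mul_right q _)]
  exact fun h1 => hq (Nat.dvd_one.mp h1)

theorem stmt2_general (q k n N : ℕ)
    (hq : Nat.Prime q) (hk4 : k % 4 = 1)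
    (hco : Nat.Coprime q n) (hN : N = q ^ k * n ^ 2)
    (hperf : sigma N = 2 * N) :
    sigma n ≠ sigma q := by
  intro hσ
  rw [sigma_prime hq] at hσ
  subst hN
  have hn : n ≠ 0 := by
    rintro rfl
    exact hq.ne_one (Nat.coprime_zero_right q |>.mp hco)
  obtain ⟨p, hpn, hqp⟩ := exists_dvd_sigma_ordProj_of_dvd_sigma hq (pow_ne_zero 2 hn)
    (prime_dvd_sigma_of_perfect hq (by omega) (hco.pow_right 2) hperf)
  rw [Nat.primeFactors_pow n two_ne_zero] at hpn
  rw [Nat.factorization_pow, Finsupp.smul_apply, smul_eq_mul] at hqp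
  have hp := Nat.prime_of_mem_primeFactors hpn
  have hpn_dvd := Nat.dvd_of_mem_primeFactors hpn
  have ha : n.factorization p ≠ 0 := (hp.factorization_pos_of_dvd hn hpn_dvd).ne'
  have hqa := lt_two_mul_pow_of_dvd_sigma_prime_pow_two_mul hp ha hqp
    (hσ ▸ sigma_ordProj_dvd_sigma hp hn)
  have hnq : n < q + 1 := hσ ▸ lt_sigma (hp.one_lt.trans_le (Nat.le_of_dvd (by omega) hpn_dvd))
  have hna : n = p ^ n.factorization p :=
    Nat.eq_of_dvd_of_lt_two_mul hn (Nat.ordProj_dvd n p) (by omega)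
  exact not_dvd_sigma_prime_pow_two_mul hp hq.ne_one (hna ▸ hσ) hqp

theorem stmt2 (q k n N : ℕ)
    (hq : Nat.Prime q) (hq4 : q % 4 = 1) (hk4 : k % 4 = 1)
    (hco : Nat.Coprime q n) (hN : N = q ^ k * n ^ 2)
    (hodd : Odd N) (hperf : sigma N = 2 * N) :
    sigma n ≠ sigma q :=
  stmt2_general q k n N hq hk4 hco hN hperf
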